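/- arXiv:2004.10145 — 2 statements merged into one kernel-verified Lean document; each statement's English description precedes it below -/
import Mathlib

section
/- Let T > 0, let m : ℝ → ℝ be continuous with m ≥ 0, let f : [0, T] × ℝ → ℝ be continuous with f(s, ·) ∈ L²(ℝ) for every s and s ↦ ‖f(s, ·)‖_{L²} continuous, and let u be a classical solution on [0, T] of the wave equation with potential m and source f. Then for every t ∈ [0, T]: √(E(t)) ≤ √(E(0)) + ∫₀ᵗ ‖f(s, ·)‖_{L²(ℝ)} ds, where E(t) := ∫_ℝ ((∂_t u(t,x))² + (∂_x u(t,x))² + m(x) u(t,x)²) dx. -/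
open MeasureTheory

/-- A classical solution on `[0,T]` of the wave equation with potential `m`
and source `f`: a `C²` function `u : ℝ × ℝ → ℝ` vanishing for `|x| ≥ R`
(for some `R > 0`) when `t ∈ [0,T]`, satisfying
`∂_t² u = ∂_x² u − m(x) u + f(t,x)` on `[0,T] × ℝ`. -/
def IsClassicalSolution (T : ℝ) (m : ℝ → ℝ) (f : ℝ → ℝ → ℝ) (u : ℝ → ℝ → ℝ) : Prop :=
  ContDiff ℝ 2 (fun p : ℝ × ℝ => u p.1 p.2) ∧
  (∃ R > (0 : ℝ), ∀ t ∈ Set.Icc (0 : ℝ) T, ∀ x : ℝ, R ≤ |x| → u t x = 0) ∧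
  ∀ t ∈ Set.Icc (0 : ℝ) T, ∀ x : ℝ,
    iteratedDeriv 2 (fun τ => u τ x) t =
      iteratedDeriv 2 (fun y => u t y) x - m x * u t x + f t x

/-!
Multiplying the equation by `∂ₜu` and integrating by parts in `x` (the flux `2 ∂ₜu ∂ₓu` vanishes
at `x = ±R`) shows that the energy `E(t)` of the solution satisfies `E'(t) = 2 ∫ ∂ₜu f`.
Since `m ≥ 0`, `∫ (∂ₜu)² ≤ E`, so Cauchy–Schwarz gives `E' ≤ 2 √E ‖f(t)‖`, i.e. formally
`(√E)' ≤ ‖f(t)‖`. To integrate this where `E` may vanish, one compares `√(E + ε)` with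
`√(E(0) + ε) + ∫₀ᵗ ‖f(s)‖ ds` and lets `ε → 0`.
-/

open Set Function

theorem integral_mul_le_sqrt_mul_sqrt {α : Type*} [MeasurableSpace α] {μ : Measure α}
    {a b : α → ℝ} (ha : Integrable (fun x => a x ^ 2) μ) (hb : Integrable (fun x => b x ^ 2) μ)
    (hab : Integrable (fun x => a x * b x) μ) :
    ∫ x, a x * b x ∂μ ≤ √(∫ x, a x ^ 2 ∂μ) * √(∫ x, b x ^ 2 ∂μ) := by
  have hquad : ∀ l : ℝ, 0 ≤ (∫ x, a x ^ 2 ∂μ) * (l * l) + (-2 * ∫ x, a x * b x ∂μ) * l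
      + ∫ x, b x ^ 2 ∂μ := fun l =>
    calc 0 ≤ ∫ x, (l * a x - b x) ^ 2 ∂μ := integral_nonneg fun x => sq_nonneg _
      _ = ∫ x, (l * l) * a x ^ 2 + (-2 * l) * (a x * b x) + b x ^ 2 ∂μ := by
        congr 1; ext x; ring
      _ = _ := by
        have h₁ : Integrable (fun x => (l * l) * a x ^ 2 + (-2 * l) * (a x * b x)) μ :=
          (ha.const_mul _).add (hab.const_mul _)
        rw [integral_add h₁ hb, integral_add (ha.const_mul _) (hab.const_mul _),
          integral_const_mul, integral_const_mul]
        ring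
  have hdisc := discrim_le_zero hquad
  rw [discrim] at hdisc
  rw [← Real.sqrt_mul (integral_nonneg fun x => sq_nonneg (a x))]
  exact Real.le_sqrt_of_sq_le (by nlinarith)

theorem sqrt_add_le_sqrt_add_add_integral_of_hasDerivAt_le {E E' g : ℝ → ℝ} {t ε : ℝ}
    (ht : 0 ≤ t) (hε : 0 < ε) (hE : ∀ s ∈ Icc 0 t, HasDerivAt E (E' s) s)
    (hE_nonneg : ∀ s ∈ Icc 0 t, 0 ≤ E s) (hg : Continuous g)
    (hg_nonneg : ∀ s ∈ Ioo 0 t, 0 ≤ g s) (hE' : ∀ s ∈ Ioo 0 t, E' s ≤ 2 * √(E s) * g s) :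
    √(E t + ε) ≤ √(E 0 + ε) + ∫ s in 0..t, g s := by
  have hpos : ∀ s ∈ Icc 0 t, 0 < E s + ε := fun s hs => by linarith [hE_nonneg s hs]
  have hderiv : ∀ s ∈ Icc 0 t, HasDerivAt
      (fun r => (∫ σ in 0..r, g σ) + √(E 0 + ε) - √(E r + ε))
      (g s - E' s / (2 * √(E s + ε))) s := fun s hs =>
    ((hg.integral_hasStrictDerivAt 0 s).hasDerivAt.add_const _).sub
      (((hE s hs).add_const ε).sqrt (hpos s hs).ne')
  have hderiv_nonneg : ∀ s ∈ Ioo 0 t, 0 ≤ g s - E' s / (2 * √(E s + ε)) := fun s hs => by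
    have hsqrt := Real.sqrt_pos.2 (hpos s (Ioo_subset_Icc_self hs))
    rw [sub_nonneg, div_le_iff₀ (mul_pos two_pos hsqrt)]
    calc E' s ≤ 2 * √(E s) * g s := hE' s hs
      _ ≤ 2 * √(E s + ε) * g s := by
        gcongr
        · exact hg_nonneg s hs
        · linarith
      _ = g s * (2 * √(E s + ε)) := by ring
  have hmono := monotoneOn_of_hasDerivWithinAt_nonneg (convex_Icc 0 t)
    (fun s hs => (hderiv s hs).continuousAt.continuousWithinAt)
    (fun s hs => (hderiv s (interior_subset hs)).hasDerivWithinAt)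
    (fun s hs => hderiv_nonneg s (by rwa [interior_Icc] at hs))
    (left_mem_Icc.2 ht) (right_mem_Icc.2 ht) ht
  simp only [intervalIntegral.integral_same, zero_add, sub_self] at hmono
  linarith

theorem sqrt_le_sqrt_add_integral_of_hasDerivAt_le {E E' g : ℝ → ℝ} {t : ℝ} (ht : 0 ≤ t)
    (hE : ∀ s ∈ Icc 0 t, HasDerivAt E (E' s) s) (hE_nonneg : ∀ s ∈ Icc 0 t, 0 ≤ E s)
    (hg : Continuous g) (hg_nonneg : ∀ s ∈ Ioo 0 t, 0 ≤ g s)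
    (hE' : ∀ s ∈ Ioo 0 t, E' s ≤ 2 * √(E s) * g s) :
    √(E t) ≤ √(E 0) + ∫ s in 0..t, g s := by
  refine le_of_forall_pos_le_add fun δ hδ => ?_
  have hsqrt : √(E 0 + δ ^ 2) ≤ √(E 0) + δ := by
    rw [Real.sqrt_le_left (by positivity)]
    nlinarith [Real.sq_sqrt (hE_nonneg 0 (left_mem_Icc.2 ht)), Real.sqrt_nonneg (E 0)]
  calc √(E t) ≤ √(E t + δ ^ 2) := Real.sqrt_le_sqrt (by nlinarith)
    _ ≤ √(E 0 + δ ^ 2) + ∫ s in 0..t, g s :=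
      sqrt_add_le_sqrt_add_add_integral_of_hasDerivAt_le ht (by positivity) hE hE_nonneg hg
        hg_nonneg hE'
    _ ≤ _ := by linarith

theorem iteratedDeriv_two_eq_deriv_deriv {F : Type*} [NormedAddCommGroup F] [NormedSpace ℝ F]
    (g : ℝ → F) : iteratedDeriv 2 g = deriv (deriv g) := by
  rw [iteratedDeriv_succ, iteratedDeriv_one]

theorem deriv_eq_zero_of_eqOn_zero {F : Type*} [NormedAddCommGroup F] [NormedSpace ℝ F]
    {f : ℝ → F} {s : Set ℝ} {x : ℝ} (hf : DifferentiableAt ℝ f x)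
    (hs : UniqueDiffWithinAt ℝ s x) (hx : x ∈ s) (h0 : EqOn f 0 s) : deriv f x = 0 :=
  hs.eq_deriv s hf.hasDerivAt.hasDerivWithinAt ((hasDerivWithinAt_const x s 0).congr h0 (h0 hx))

theorem uniqueDiffWithinAt_setOf_le_abs {R x : ℝ} (hx : R ≤ |x|) :
    UniqueDiffWithinAt ℝ {y | R ≤ |y|} x := by
  rcases le_total 0 x with h | h
  · refine (uniqueDiffWithinAt_Ici x).mono fun y (hy : x ≤ y) => ?_
    rw [abs_of_nonneg h] at hx
    exact hx.trans (hy.trans (le_abs_self y))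
  · refine (uniqueDiffWithinAt_Iic x).mono fun y (hy : y ≤ x) => ?_
    rw [abs_of_nonpos h] at hx
    exact hx.trans ((neg_le_neg hy).trans (neg_le_abs y))

theorem intervalIntegral.hasDerivAt_integral_of_continuous {F : Type*} [NormedAddCommGroup F]
    [NormedSpace ℝ F] {G G' : ℝ → ℝ → F} {a b t₀ : ℝ}
    (hG : Continuous (uncurry G)) (hG' : Continuous (uncurry G'))
    (hGG' : ∀ t x, HasDerivAt (fun τ => G τ x) (G' t x) t) :
    HasDerivAt (fun t => ∫ x in a..b, G t x) (∫ x in a..b, G' t₀ x) t₀ := by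
  obtain ⟨C, hC⟩ := ((isCompact_Icc (a := t₀ - 1) (b := t₀ + 1)).prod
    (isCompact_uIcc (a := a) (b := b))).exists_bound_of_continuousOn hG'.continuousOn
  exact (hasDerivAt_integral_of_dominated_loc_of_deriv_le (bound := fun _ => C)
    (Icc_mem_nhds (by linarith) (by linarith))
    (Filter.Eventually.of_forall fun t => (hG.uncurry_left t).aestronglyMeasurable)
    ((hG.uncurry_left t₀).intervalIntegrable a b) (hG'.uncurry_left t₀).aestronglyMeasurable
    (Filter.Eventually.of_forall fun x hx t ht => hC (t, x) ⟨ht, uIoc_subset_uIcc hx⟩)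
    intervalIntegrable_const (Filter.Eventually.of_forall fun x _ t _ => hGG' t x)).2

section PartialDerivatives

variable {F : Type*} [NormedAddCommGroup F] [NormedSpace ℝ F]

noncomputable def partialFst (v : ℝ → ℝ → F) (t x : ℝ) : F := deriv (fun τ => v τ x) t

noncomputable def partialSnd (v : ℝ → ℝ → F) (t x : ℝ) : F := deriv (v t) x

variable {v : ℝ → ℝ → F} {t x : ℝ}

theorem hasDerivAt_fderiv_apply_fst (h : DifferentiableAt ℝ (uncurry v) (t, x)) :
    HasDerivAt (fun τ => v τ x) (fderiv ℝ (uncurry v) (t, x) (1, 0)) t :=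
  h.hasFDerivAt.comp_hasDerivAt (f := fun τ => (τ, x)) t
    ((hasDerivAt_id t).prodMk (hasDerivAt_const t x))

theorem hasDerivAt_fderiv_apply_snd (h : DifferentiableAt ℝ (uncurry v) (t, x)) :
    HasDerivAt (v t) (fderiv ℝ (uncurry v) (t, x) (0, 1)) x :=
  h.hasFDerivAt.comp_hasDerivAt x ((hasDerivAt_const x t).prodMk (hasDerivAt_id x))

theorem hasDerivAt_partialFst (h : DifferentiableAt ℝ (uncurry v) (t, x)) :
    HasDerivAt (fun τ => v τ x) (partialFst v t x) t :=
  (hasDerivAt_fderiv_apply_fst h).differentiableAt.hasDerivAt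

theorem hasDerivAt_partialSnd (h : DifferentiableAt ℝ (uncurry v) (t, x)) :
    HasDerivAt (v t) (partialSnd v t x) x :=
  (hasDerivAt_fderiv_apply_snd h).differentiableAt.hasDerivAt

theorem partialFst_eq_fderiv (h : DifferentiableAt ℝ (uncurry v) (t, x)) :
    partialFst v t x = fderiv ℝ (uncurry v) (t, x) (1, 0) :=
  (hasDerivAt_fderiv_apply_fst h).deriv

theorem partialSnd_eq_fderiv (h : DifferentiableAt ℝ (uncurry v) (t, x)) :
    partialSnd v t x = fderiv ℝ (uncurry v) (t, x) (0, 1) :=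
  (hasDerivAt_fderiv_apply_snd h).deriv

theorem uncurry_partialFst_eq_fderiv (h : Differentiable ℝ (uncurry v)) :
    uncurry (partialFst v) = fun p => fderiv ℝ (uncurry v) p (1, 0) :=
  funext fun p => partialFst_eq_fderiv (h p)

theorem uncurry_partialSnd_eq_fderiv (h : Differentiable ℝ (uncurry v)) :
    uncurry (partialSnd v) = fun p => fderiv ℝ (uncurry v) p (0, 1) :=
  funext fun p => partialSnd_eq_fderiv (h p)

theorem ContDiff.uncurry_partialFst {n k : WithTop ℕ∞} (h : ContDiff ℝ n (uncurry v))
    (hkn : k + 1 ≤ n) : ContDiff ℝ k (uncurry (partialFst v)) := by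
  rw [uncurry_partialFst_eq_fderiv ((h.of_le (le_add_self.trans hkn)).differentiable one_ne_zero)]
  exact (h.fderiv_right hkn).clm_apply contDiff_const

theorem ContDiff.uncurry_partialSnd {n k : WithTop ℕ∞} (h : ContDiff ℝ n (uncurry v))
    (hkn : k + 1 ≤ n) : ContDiff ℝ k (uncurry (partialSnd v)) := by
  rw [uncurry_partialSnd_eq_fderiv ((h.of_le (le_add_self.trans hkn)).differentiable one_ne_zero)]
  exact (h.fderiv_right hkn).clm_apply contDiff_const

theorem fderiv_fderiv_apply {U : ℝ × ℝ → F} {p w : ℝ × ℝ}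
    (h : DifferentiableAt ℝ (fderiv ℝ U) p) (v' : ℝ × ℝ) :
    fderiv ℝ (fun q => fderiv ℝ U q w) p v' = fderiv ℝ (fderiv ℝ U) p v' w := by
  rw [fderiv_clm_apply h (differentiableAt_const w)]
  simp

theorem partialSnd_partialFst (h : ContDiff ℝ 2 (uncurry v)) (t x : ℝ) :
    partialSnd (partialFst v) t x = partialFst (partialSnd v) t x := by
  have hv := h.differentiable two_ne_zero
  have hd : Differentiable ℝ (fderiv ℝ (uncurry v)) :=
    (h.fderiv_right (m := 1) (by norm_num)).differentiable one_ne_zero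
  rw [partialSnd_eq_fderiv
      ((h.uncurry_partialFst (k := 1) (by norm_num)).differentiable one_ne_zero _),
    partialFst_eq_fderiv
      ((h.uncurry_partialSnd (k := 1) (by norm_num)).differentiable one_ne_zero _),
    uncurry_partialFst_eq_fderiv hv, uncurry_partialSnd_eq_fderiv hv,
    fderiv_fderiv_apply (hd _), fderiv_fderiv_apply (hd _)]
  exact h.contDiffAt.isSymmSndFDerivAt (by simp) _ _

end PartialDerivatives

section WaveEnergy

variable {m : ℝ → ℝ} {f u : ℝ → ℝ → ℝ} {T R t : ℝ}

noncomputable def energyDensity (m : ℝ → ℝ) (u : ℝ → ℝ → ℝ) (t x : ℝ) : ℝ :=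
  partialFst u t x ^ 2 + partialSnd u t x ^ 2 + m x * u t x ^ 2

theorem energyDensity_nonneg (hm : ∀ x, 0 ≤ m x) (t x : ℝ) : 0 ≤ energyDensity m u t x := by
  have := hm x
  unfold energyDensity
  positivity

theorem hasDerivAt_energyDensity (hu : ContDiff ℝ 2 (uncurry u)) (t x : ℝ) :
    HasDerivAt (fun τ => energyDensity m u τ x)
      (2 * partialFst u t x * partialFst (partialFst u) t x
        + 2 * partialSnd u t x * partialFst (partialSnd u) t x
        + 2 * m x * u t x * partialFst u t x) t := by
  have hut := hasDerivAt_partialFst (hu.differentiable two_ne_zero (t, x))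
  have hutt := hasDerivAt_partialFst
    ((hu.uncurry_partialFst (k := 1) (by norm_num)).differentiable one_ne_zero (t, x))
  have huxt := hasDerivAt_partialFst
    ((hu.uncurry_partialSnd (k := 1) (by norm_num)).differentiable one_ne_zero (t, x))
  exact (((hutt.pow 2).add (huxt.pow 2)).add ((hut.pow 2).const_mul (m x))).congr_deriv
    (by norm_num; ring)

theorem continuous_energyDensity (hm : Continuous m) (hu : ContDiff ℝ 2 (uncurry u)) :
    Continuous (uncurry (energyDensity m u)) := by
  have hut : Continuous fun p : ℝ × ℝ => partialFst u p.1 p.2 :=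
    (hu.uncurry_partialFst (k := 1) (by norm_num)).continuous
  have hux : Continuous fun p : ℝ × ℝ => partialSnd u p.1 p.2 :=
    (hu.uncurry_partialSnd (k := 1) (by norm_num)).continuous
  have huc : Continuous fun p : ℝ × ℝ => u p.1 p.2 := hu.continuous
  unfold energyDensity uncurry
  fun_prop

theorem continuous_partialFst_energyDensity (hm : Continuous m)
    (hu : ContDiff ℝ 2 (uncurry u)) : Continuous (uncurry (partialFst (energyDensity m u))) := by
  have hut : Continuous fun p : ℝ × ℝ => partialFst u p.1 p.2 :=
    (hu.uncurry_partialFst (k := 1) (by norm_num)).continuous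
  have hux : Continuous fun p : ℝ × ℝ => partialSnd u p.1 p.2 :=
    (hu.uncurry_partialSnd (k := 1) (by norm_num)).continuous
  have hutt : Continuous fun p : ℝ × ℝ => partialFst (partialFst u) p.1 p.2 :=
    ((hu.uncurry_partialFst (k := 1) (by norm_num)).uncurry_partialFst (k := 0)
      (by norm_num)).continuous
  have huxt : Continuous fun p : ℝ × ℝ => partialFst (partialSnd u) p.1 p.2 :=
    ((hu.uncurry_partialSnd (k := 1) (by norm_num)).uncurry_partialFst (k := 0)
      (by norm_num)).continuous
  have huc : Continuous fun p : ℝ × ℝ => u p.1 p.2 := hu.continuous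
  rw [show uncurry (partialFst (energyDensity m u)) = _ from
    funext fun p => (hasDerivAt_energyDensity hu p.1 p.2).deriv]
  fun_prop

theorem hasDerivAt_intervalIntegral_energyDensity (hm : Continuous m)
    (hu : ContDiff ℝ 2 (uncurry u)) (a b t : ℝ) :
    HasDerivAt (fun t => ∫ x in a..b, energyDensity m u t x)
      (∫ x in a..b, partialFst (energyDensity m u) t x) t :=
  intervalIntegral.hasDerivAt_integral_of_continuous (continuous_energyDensity hm hu)
    (continuous_partialFst_energyDensity hm hu)
    fun t x => (hasDerivAt_energyDensity hu t x).differentiableAt.hasDerivAt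

theorem partialFst_eq_zero_of_le_abs (hsupp : ∀ t ∈ Icc 0 T, ∀ x, R ≤ |x| → u t x = 0)
    (hT : 0 < T) (hu : Differentiable ℝ (uncurry u)) (ht : t ∈ Icc 0 T) {x : ℝ}
    (hx : R ≤ |x|) : partialFst u t x = 0 :=
  deriv_eq_zero_of_eqOn_zero (hasDerivAt_partialFst (hu (t, x))).differentiableAt
    (uniqueDiffOn_Icc hT t ht) ht fun τ hτ => hsupp τ hτ x hx

theorem partialSnd_eq_zero_of_le_abs (hsupp : ∀ t ∈ Icc 0 T, ∀ x, R ≤ |x| → u t x = 0)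
    (hu : Differentiable ℝ (uncurry u)) (ht : t ∈ Icc 0 T) {x : ℝ} (hx : R ≤ |x|) :
    partialSnd u t x = 0 :=
  deriv_eq_zero_of_eqOn_zero (hasDerivAt_partialSnd (hu (t, x))).differentiableAt
    (uniqueDiffWithinAt_setOf_le_abs hx) hx fun y hy => hsupp t ht y hy

theorem integral_energyDensity_eq_intervalIntegral
    (hsupp : ∀ t ∈ Icc 0 T, ∀ x, R ≤ |x| → u t x = 0) (hT : 0 < T)
    (hu : Differentiable ℝ (uncurry u)) (hR : 0 ≤ R) (ht : t ∈ Icc 0 T) :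
    ∫ x, energyDensity m u t x = ∫ x in -R..R, energyDensity m u t x := by
  rw [intervalIntegral.integral_of_le (neg_le_self hR),
    setIntegral_eq_integral_of_forall_compl_eq_zero]
  intro x hx
  have hxR : R ≤ |x| := by
    rw [mem_Ioc, not_and_or, not_lt, not_le] at hx
    rcases hx with hx | hx
    · exact le_abs'.2 (Or.inl hx)
    · exact le_abs'.2 (Or.inr hx.le)
  simp [energyDensity, partialFst_eq_zero_of_le_abs hsupp hT hu ht hxR,
    partialSnd_eq_zero_of_le_abs hsupp hu ht hxR, hsupp t ht x hxR]

theorem intervalIntegral_partialFst_energyDensity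
    (hsupp : ∀ t ∈ Icc 0 T, ∀ x, R ≤ |x| → u t x = 0) (hT : 0 < T)
    (hu : ContDiff ℝ 2 (uncurry u))
    (hpde : ∀ t ∈ Icc 0 T, ∀ x, partialFst (partialFst u) t x =
      partialSnd (partialSnd u) t x - m x * u t x + f t x)
    (hf : Continuous (uncurry f)) (ht : t ∈ Icc 0 T) :
    ∫ x in -R..R, partialFst (energyDensity m u) t x =
      ∫ x in -R..R, 2 * partialFst u t x * f t x := by
  have hut := hu.uncurry_partialFst (k := 1) (by norm_num)
  have hux := hu.uncurry_partialSnd (k := 1) (by norm_num)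
  have hflux : ∀ x, HasDerivAt (fun y => 2 * (partialFst u t y * partialSnd u t y))
      (2 * (partialSnd (partialFst u) t x * partialSnd u t x +
        partialFst u t x * partialSnd (partialSnd u) t x)) x := fun x =>
    ((hasDerivAt_partialSnd (hut.differentiable one_ne_zero (t, x))).mul
      (hasDerivAt_partialSnd (hux.differentiable one_ne_zero (t, x)))).const_mul 2
  have hflux_cont : Continuous fun x => 2 * (partialSnd (partialFst u) t x * partialSnd u t x +
      partialFst u t x * partialSnd (partialSnd u) t x) := by
    have := (hut.uncurry_partialSnd (k := 0) (by norm_num)).continuous.uncurry_left t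
    have := (hux.uncurry_partialSnd (k := 0) (by norm_num)).continuous.uncurry_left t
    have := hut.continuous.uncurry_left t
    have := hux.continuous.uncurry_left t
    fun_prop
  have hsource_cont : Continuous fun x => 2 * partialFst u t x * f t x := by
    have := hut.continuous.uncurry_left t
    have := hf.uncurry_left t
    fun_prop
  have hpoint : ∀ x, partialFst (energyDensity m u) t x =
      2 * (partialSnd (partialFst u) t x * partialSnd u t x +
        partialFst u t x * partialSnd (partialSnd u) t x) + 2 * partialFst u t x * f t x := by
    intro x
    rw [partialFst, (hasDerivAt_energyDensity hu t x).deriv, hpde t ht x, partialSnd_partialFst hu]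
    ring
  have hR : R ≤ |-R| := (abs_neg R).symm ▸ le_abs_self R
  simp only [hpoint]
  rw [intervalIntegral.integral_add (hflux_cont.intervalIntegrable _ _)
      (hsource_cont.intervalIntegrable _ _),
    intervalIntegral.integral_eq_sub_of_hasDerivAt (fun x _ => hflux x)
      (hflux_cont.intervalIntegrable _ _),
    partialFst_eq_zero_of_le_abs hsupp hT (hu.differentiable two_ne_zero) ht (le_abs_self R),
    partialFst_eq_zero_of_le_abs hsupp hT (hu.differentiable two_ne_zero) ht hR]
  simp

theorem intervalIntegral_two_mul_partialFst_mul_le (hm : ∀ x, 0 ≤ m x) (hmc : Continuous m)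
    (hu : ContDiff ℝ 2 (uncurry u)) (hf : Continuous (uncurry f))
    (hfL2 : Integrable (fun x => f t x ^ 2)) (hR : 0 ≤ R) :
    ∫ x in -R..R, 2 * partialFst u t x * f t x ≤
      2 * √(∫ x in -R..R, energyDensity m u t x) * √(∫ x, f t x ^ 2) := by
  have hut : Continuous (partialFst u t) :=
    (hu.uncurry_partialFst (k := 0) (by norm_num)).continuous.uncurry_left t
  have hft : Continuous (f t) := hf.uncurry_left t
  have hut_le : ∀ x, partialFst u t x ^ 2 ≤ energyDensity m u t x := fun x => by
    have := mul_nonneg (hm x) (sq_nonneg (u t x))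
    unfold energyDensity
    nlinarith [sq_nonneg (partialSnd u t x)]
  simp only [intervalIntegral.integral_of_le (neg_le_self hR)]
  calc ∫ x in Ioc (-R) R, 2 * partialFst u t x * f t x
      = 2 * ∫ x in Ioc (-R) R, partialFst u t x * f t x := by
        simp only [mul_assoc]
        exact integral_const_mul _ _
    _ ≤ 2 * (√(∫ x in Ioc (-R) R, partialFst u t x ^ 2) * √(∫ x in Ioc (-R) R, f t x ^ 2)) := by
        gcongr
        exact integral_mul_le_sqrt_mul_sqrt (hut.pow 2).integrableOn_Ioc
          (hft.pow 2).integrableOn_Ioc (hut.mul hft).integrableOn_Ioc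
    _ ≤ 2 * (√(∫ x in Ioc (-R) R, energyDensity m u t x) * √(∫ x, f t x ^ 2)) := by
        gcongr 2 * (√?_ * √?_)
        · exact integral_mono (hut.pow 2).integrableOn_Ioc
            ((continuous_energyDensity hmc hu).uncurry_left t).integrableOn_Ioc hut_le
        · exact setIntegral_le_integral hfL2 (Filter.Eventually.of_forall fun x => sq_nonneg _)
    _ = _ := by ring

end WaveEnergy

/-- Inhomogeneous energy inequality: for a classical solution with
non-negative potential `m` and source `f`,
`√(E(t)) ≤ √(E(0)) + ∫₀ᵗ ‖f(s,·)‖_{L²} ds` on `[0,T]`, where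
`E(t) = ∫ ((∂_t u)² + (∂_x u)² + m u²) dx`. -/
theorem wave_inhomogeneous_energy_inequality
    (T : ℝ) (hT : 0 < T) (m : ℝ → ℝ) (hmc : Continuous m) (hm : ∀ x, 0 ≤ m x)
    (f : ℝ → ℝ → ℝ) (hfc : Continuous (fun p : ℝ × ℝ => f p.1 p.2))
    (hfL2 : ∀ s : ℝ, Integrable (fun x => (f s x) ^ 2))
    (hfnorm : Continuous (fun s : ℝ => Real.sqrt (∫ x : ℝ, (f s x) ^ 2)))
    (u : ℝ → ℝ → ℝ) (hu : IsClassicalSolution T m f u) :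
    ∀ t ∈ Set.Icc (0 : ℝ) T,
      Real.sqrt (∫ x : ℝ, ((deriv (fun τ => u τ x) t) ^ 2 +
          (deriv (fun y => u t y) x) ^ 2 + m x * (u t x) ^ 2)) ≤
        Real.sqrt (∫ x : ℝ, ((deriv (fun τ => u τ x) 0) ^ 2 +
          (deriv (fun y => u 0 y) x) ^ 2 + m x * (u 0 x) ^ 2)) +
        ∫ s in (0:ℝ)..t, Real.sqrt (∫ x : ℝ, (f s x) ^ 2) := by
  obtain ⟨hu, ⟨R, hR, hsupp⟩, hpde⟩ := hu
  have hpde' : ∀ t ∈ Icc 0 T, ∀ x, partialFst (partialFst u) t x =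
      partialSnd (partialSnd u) t x - m x * u t x + f t x := fun t ht x => by
    have h := hpde t ht x
    rw [iteratedDeriv_two_eq_deriv_deriv, iteratedDeriv_two_eq_deriv_deriv] at h
    exact h
  intro t ht
  change √(∫ x, energyDensity m u t x) ≤ √(∫ x, energyDensity m u 0 x) + _
  have hud := hu.differentiable two_ne_zero
  rw [integral_energyDensity_eq_intervalIntegral hsupp hT hud hR.le ht,
    integral_energyDensity_eq_intervalIntegral hsupp hT hud hR.le (left_mem_Icc.2 hT.le)]
  refine sqrt_le_sqrt_add_integral_of_hasDerivAt_le ht.1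
    (fun s _ => hasDerivAt_intervalIntegral_energyDensity hmc hu _ _ s)
    (fun s _ => intervalIntegral.integral_nonneg (neg_le_self hR.le)
      fun x _ => energyDensity_nonneg hm s x)
    hfnorm (fun s _ => Real.sqrt_nonneg _) fun s hs => ?_
  rw [intervalIntegral_partialFst_energyDensity hsupp hT hu hpde' hfc
    ⟨hs.1.le, hs.2.le.trans ht.2⟩]
  exact intervalIntegral_two_mul_partialFst_mul_le hm hmc hu hfc (hfL2 s) hR.le
end

section
/- Let T > 0 and let m, m̃ : ℝ → ℝ be continuous and bounded with m ≥ 0 and m̃ ≥ 0. Let u be a classical solution on [0, T] of the wave equation with potential m and source f = 0, let ũ be a classical solution on [0, T] of the wave equation with potential m̃ and source f = 0, and suppose u(0, x) = ũ(0, x) and ∂_t u(0, x) = ∂_t ũ(0, x) for all x ∈ ℝ. Then for every t ∈ [0, T]: ‖u(t, ·) − ũ(t, ·)‖_{L²(ℝ)} ≤ T² · sup_{x ∈ ℝ} |m(x) − m̃(x)| · sup_{s ∈ [0, T]} ‖ũ(s, ·)‖_{L²(ℝ)}. -/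
open MeasureTheory

open Set Filter Topology Function

theorem integral_mul_le_sqrt_mul_sqrt_s15 {α : Type*} [MeasurableSpace α] {μ : Measure α}
    {f g : α → ℝ} (hf : MemLp f 2 μ) (hg : MemLp g 2 μ) :
    ∫ a, f a * g a ∂μ ≤ √(∫ a, f a ^ 2 ∂μ) * √(∫ a, g a ^ 2 ∂μ) := by
  have hsq : ∀ h : α → ℝ, ∫ a, ‖h a‖ ^ (2 : ℝ) ∂μ = ∫ a, h a ^ 2 ∂μ := fun h => by
    simp only [Real.rpow_two, Real.norm_eq_abs, sq_abs]
  calc ∫ a, f a * g a ∂μ ≤ ∫ a, ‖f a‖ * ‖g a‖ ∂μ := by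
        refine (le_abs_self _).trans ?_
        simpa only [Real.norm_eq_abs, norm_mul] using
          norm_integral_le_integral_norm (μ := μ) (fun a => f a * g a)
    _ ≤ (∫ a, ‖f a‖ ^ (2 : ℝ) ∂μ) ^ (1 / 2 : ℝ) * (∫ a, ‖g a‖ ^ (2 : ℝ) ∂μ) ^ (1 / 2 : ℝ) :=
        integral_mul_norm_le_Lp_mul_Lq .two_two (by simpa using hf) (by simpa using hg)
    _ = _ := by rw [hsq, hsq, Real.sqrt_eq_rpow, Real.sqrt_eq_rpow]

theorem sqrt_integral_mul_sq_le {α : Type*} [MeasurableSpace α] {μ : Measure α}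
    {c g : α → ℝ} {D : ℝ} (hc : ∀ a, |c a| ≤ D) (hg : Integrable (fun a => g a ^ 2) μ) :
    √(∫ a, (c a * g a) ^ 2 ∂μ) ≤ D * √(∫ a, g a ^ 2 ∂μ) := by
  rcases isEmpty_or_nonempty α with hα | ⟨⟨a₀⟩⟩
  · simp [integral_of_isEmpty]
  have hD : 0 ≤ D := (abs_nonneg _).trans (hc a₀)
  calc √(∫ a, (c a * g a) ^ 2 ∂μ) ≤ √(∫ a, D ^ 2 * g a ^ 2 ∂μ) := by
        refine Real.sqrt_le_sqrt (integral_mono_of_nonneg (ae_of_all _ fun a => sq_nonneg _)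
          (hg.const_mul _) (ae_of_all _ fun a => ?_))
        show (c a * g a) ^ 2 ≤ D ^ 2 * g a ^ 2
        rw [mul_pow, ← sq_abs (c a)]
        exact mul_le_mul_of_nonneg_right (pow_le_pow_left₀ (abs_nonneg _) (hc a) 2) (sq_nonneg _)
    _ = D * √(∫ a, g a ^ 2 ∂μ) := by
        rw [integral_const_mul, Real.sqrt_mul (sq_nonneg D), Real.sqrt_sq hD]

theorem integral_eq_zero_of_hasDerivAt_of_hasCompactSupport {E : Type*} [NormedAddCommGroup E]
    [NormedSpace ℝ E] [CompleteSpace E] {f f' : ℝ → E} (hf : ∀ x, HasDerivAt f (f' x) x)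
    (hf' : Integrable f') (hc : HasCompactSupport f) : ∫ x, f' x = 0 := by
  simpa using integral_of_hasDerivAt_of_tendsto hf hf'
    (hc.is_zero_at_infty.mono_left atBot_le_cocompact)
    (hc.is_zero_at_infty.mono_left atTop_le_cocompact)

theorem sqrt_le_of_hasDerivAt_le_two_sqrt_mul {f f' g g' : ℝ → ℝ} {a b : ℝ}
    (hf : ContinuousOn f (Icc a b)) (hf_nonneg : ∀ t ∈ Icc a b, 0 ≤ f t) (hfa : f a = 0)
    (hf' : ∀ t ∈ Ioo a b, HasDerivAt f (f' t) t)
    (hg : ∀ t, HasDerivAt g (g' t) t) (hga : g a = 0) (hg' : ∀ t ∈ Ioo a b, 0 ≤ g' t)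
    (hle : ∀ t ∈ Ioo a b, f' t ≤ 2 * √(f t) * g' t) :
    ∀ t ∈ Icc a b, √(f t) ≤ g t := by
  intro t ht
  refine le_of_forall_pos_le_add fun δ hδ => ?_
  have hpos : ∀ s ∈ Icc a b, 0 < f s + δ ^ 2 := fun s hs =>
    add_pos_of_nonneg_of_pos (hf_nonneg s hs) (pow_pos hδ 2)
  -- `g - √(f + δ²)` is monotone: the `δ²` keeps the square root differentiable where `f = 0`
  have hderiv : ∀ s ∈ Ioo a b,
      HasDerivAt (fun s => g s - √(f s + δ ^ 2)) (g' s - f' s / (2 * √(f s + δ ^ 2))) s :=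
    fun s hs => (hg s).sub (((hf' s hs).add_const _).sqrt (hpos s (Ioo_subset_Icc_self hs)).ne')
  have hmono : MonotoneOn (fun s => g s - √(f s + δ ^ 2)) (Icc a b) := by
    refine monotoneOn_of_deriv_nonneg (convex_Icc a b) ?_ ?_ ?_
    · exact (continuousOn_of_forall_continuousAt fun s _ => (hg s).continuousAt).sub
        (hf.add continuousOn_const).sqrt
    · rw [interior_Icc]
      exact fun s hs => (hderiv s hs).differentiableAt.differentiableWithinAt
    · rw [interior_Icc]
      intro s hs
      have hroot : 0 < √(f s + δ ^ 2) := Real.sqrt_pos.2 (hpos s (Ioo_subset_Icc_self hs))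
      have hmono_sqrt : √(f s) ≤ √(f s + δ ^ 2) :=
        Real.sqrt_le_sqrt (le_add_of_nonneg_right (sq_nonneg δ))
      rw [(hderiv s hs).deriv, sub_nonneg, div_le_iff₀ (by positivity)]
      nlinarith [hle s hs, hg' s hs]
  have hat := hmono (left_mem_Icc.2 (ht.1.trans ht.2)) ht ht.1
  simp only [hfa, hga, zero_add, Real.sqrt_sq hδ.le] at hat
  linarith [Real.sqrt_le_sqrt (le_add_of_nonneg_right (sq_nonneg δ) : f t ≤ f t + δ ^ 2)]

section ParametricIntegral

variable {E : Type*} [NormedAddCommGroup E] [NormedSpace ℝ E] {F F' : ℝ → ℝ → E} {s K : Set ℝ}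

theorem continuousOn_integral_of_eq_zero_off (hF : Continuous (uncurry F)) (hK : IsCompact K)
    (hF0 : ∀ t ∈ s, ∀ x ∉ K, F t x = 0) : ContinuousOn (fun t => ∫ x, F t x) s :=
  (continuous_parametric_integral_of_continuous hF hK).continuousOn.congr fun t ht =>
    (setIntegral_eq_integral_of_forall_compl_eq_zero (hF0 t ht)).symm

theorem hasDerivAt_integral_of_eq_zero_off {t₀ : ℝ} (hs : IsOpen s) (ht₀ : t₀ ∈ s)
    (hK : IsCompact K) (hF : Continuous (uncurry F)) (hF' : Continuous (uncurry F'))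
    (hF0 : ∀ t ∈ s, ∀ x ∉ K, F t x = 0) (hderiv : ∀ t ∈ s, ∀ x, HasDerivAt (F · x) (F' t x) t) :
    HasDerivAt (fun t => ∫ x, F t x) (∫ x, F' t₀ x) t₀ := by
  obtain ⟨δ, hδ, hball⟩ := Metric.isOpen_iff.1 hs t₀ ht₀
  have hB : Metric.closedBall t₀ (δ / 2) ⊆ s :=
    (Metric.closedBall_subset_ball (half_lt_self hδ)).trans hball
  obtain ⟨C, hC⟩ := ((isCompact_closedBall t₀ (δ / 2)).prod hK).exists_bound_of_continuousOn
    hF'.continuousOn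
  have hF'0 : ∀ x ∉ K, F' t₀ x = 0 := fun x hx =>
    (hderiv t₀ ht₀ x).unique <| (hasDerivAt_const t₀ (0 : E)).congr_of_eventuallyEq <|
      eventually_of_mem (hs.mem_nhds ht₀) fun t ht => hF0 t ht x hx
  have hK_int := hasDerivAt_integral_of_dominated_loc_of_deriv_le (μ := volume.restrict K)
    (bound := fun _ => C) (Metric.closedBall_mem_nhds t₀ (half_pos hδ))
    (Eventually.of_forall fun t => (hF.comp (Continuous.prodMk_right t)).aestronglyMeasurable)
    ((hF.comp (Continuous.prodMk_right t₀)).continuousOn.integrableOn_compact hK)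
    (hF'.comp (Continuous.prodMk_right t₀)).aestronglyMeasurable
    (ae_restrict_of_forall_mem hK.measurableSet fun x hx t ht => hC (t, x) ⟨ht, hx⟩)
    (integrableOn_const hK.measure_ne_top)
    (Eventually.of_forall fun x t ht => hderiv t (hB ht) x)
  rw [← setIntegral_eq_integral_of_forall_compl_eq_zero hF'0]
  refine hK_int.2.congr_of_eventuallyEq (eventually_of_mem (hs.mem_nhds ht₀) fun t ht => ?_)
  exact (setIntegral_eq_integral_of_forall_compl_eq_zero (hF0 t ht)).symm

end ParametricIntegral

section PartialDeriv

variable {E : Type*} [NormedAddCommGroup E] [NormedSpace ℝ E] {w : ℝ → ℝ → E}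

noncomputable def timeDeriv (w : ℝ → ℝ → E) (t x : ℝ) : E := deriv (w · x) t

noncomputable def spaceDeriv (w : ℝ → ℝ → E) (t x : ℝ) : E := deriv (w t ·) x

theorem hasDerivAt_timeDeriv (hw : Differentiable ℝ (uncurry w)) (t x : ℝ) :
    HasDerivAt (w · x) (timeDeriv w t x) t := by
  have h : DifferentiableAt ℝ (uncurry w ∘ fun τ => (τ, x)) t :=
    (hw (t, x)).comp t (differentiableAt_id.prodMk (differentiableAt_const x))
  exact h.hasDerivAt

theorem hasDerivAt_spaceDeriv (hw : Differentiable ℝ (uncurry w)) (t x : ℝ) :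
    HasDerivAt (w t ·) (spaceDeriv w t x) x := by
  have h : DifferentiableAt ℝ (uncurry w ∘ fun y => (t, y)) x :=
    (hw (t, x)).comp x ((differentiableAt_const t).prodMk differentiableAt_id)
  exact h.hasDerivAt

theorem uncurry_timeDeriv (hw : Differentiable ℝ (uncurry w)) :
    uncurry (timeDeriv w) = fun p => fderiv ℝ (uncurry w) p (1, 0) := by
  funext ⟨t, x⟩
  exact ((hw (t, x)).hasFDerivAt.comp_hasDerivAt t
    ((hasDerivAt_id t).prodMk (hasDerivAt_const t x))).deriv

theorem uncurry_spaceDeriv (hw : Differentiable ℝ (uncurry w)) :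
    uncurry (spaceDeriv w) = fun p => fderiv ℝ (uncurry w) p (0, 1) := by
  funext ⟨t, x⟩
  exact ((hw (t, x)).hasFDerivAt.comp_hasDerivAt x
    ((hasDerivAt_const x t).prodMk (hasDerivAt_id x))).deriv

theorem ContDiff.uncurry_timeDeriv {m n : WithTop ℕ∞} (hw : ContDiff ℝ n (uncurry w))
    (hmn : m + 1 ≤ n) : ContDiff ℝ m (uncurry (timeDeriv w)) := by
  rw [_root_.uncurry_timeDeriv (hw.differentiable fun hn => by simp [hn] at hmn)]
  exact (hw.fderiv_right hmn).clm_apply contDiff_const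

theorem ContDiff.uncurry_spaceDeriv {m n : WithTop ℕ∞} (hw : ContDiff ℝ n (uncurry w))
    (hmn : m + 1 ≤ n) : ContDiff ℝ m (uncurry (spaceDeriv w)) := by
  rw [_root_.uncurry_spaceDeriv (hw.differentiable fun hn => by simp [hn] at hmn)]
  exact (hw.fderiv_right hmn).clm_apply contDiff_const

theorem timeDeriv_spaceDeriv (hw : ContDiff ℝ 2 (uncurry w)) :
    timeDeriv (spaceDeriv w) = spaceDeriv (timeDeriv w) := by
  have hw1 : ContDiff ℝ 1 (fderiv ℝ (uncurry w)) := hw.fderiv_right (by norm_num)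
  have hsecond : ∀ p v v', fderiv ℝ (fun q => fderiv ℝ (uncurry w) q v) p v' =
      fderiv ℝ (fderiv ℝ (uncurry w)) p v' v := fun p v v' => by
    rw [fderiv_clm_apply ((hw1.differentiable one_ne_zero) p) (differentiableAt_const v)]
    simp
  funext t x
  show uncurry (timeDeriv (spaceDeriv w)) (t, x) = uncurry (spaceDeriv (timeDeriv w)) (t, x)
  rw [_root_.uncurry_timeDeriv ((hw.uncurry_spaceDeriv (m := 1) (by norm_num)).differentiable
      one_ne_zero),
    _root_.uncurry_spaceDeriv ((hw.uncurry_timeDeriv (m := 1) (by norm_num)).differentiable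
      one_ne_zero),
    _root_.uncurry_spaceDeriv (hw.differentiable (by norm_num)),
    _root_.uncurry_timeDeriv (hw.differentiable (by norm_num))]
  simp only [hsecond]
  exact (hw.contDiffAt.isSymmSndFDerivAt (by simp) _ _).symm

theorem timeDeriv_eq_zero_off {T : ℝ} {K : Set ℝ} (hT : 0 < T) (hw : Differentiable ℝ (uncurry w))
    (hw0 : ∀ t ∈ Icc 0 T, ∀ x ∉ K, w t x = 0) : ∀ t ∈ Icc 0 T, ∀ x ∉ K, timeDeriv w t x = 0 :=
  fun t ht x hx => (uniqueDiffOn_Icc hT t ht).eq_deriv _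
    (hasDerivAt_timeDeriv hw t x).hasDerivWithinAt
    ((hasDerivWithinAt_const t _ 0).congr (fun τ hτ => hw0 τ hτ x hx) (hw0 t ht x hx))

theorem spaceDeriv_eq_zero_off {s K : Set ℝ} (hK : IsClosed K)
    (hw0 : ∀ t ∈ s, ∀ x ∉ K, w t x = 0) : ∀ t ∈ s, ∀ x ∉ K, spaceDeriv w t x = 0 := by
  intro t ht x hx
  have hloc : (w t ·) =ᶠ[𝓝 x] fun _ => 0 :=
    eventually_of_mem (hK.isOpen_compl.mem_nhds hx) fun y hy => hw0 t ht y hy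
  simp [spaceDeriv, hloc.deriv_eq]

end PartialDeriv

section ClassicalSolution

variable {T : ℝ} {m m' : ℝ → ℝ} {f f' u v : ℝ → ℝ → ℝ}

theorem IsClassicalSolution.exists_isCompact (hu : IsClassicalSolution T m f u) :
    ∃ K, IsCompact K ∧ ∀ t ∈ Icc 0 T, ∀ x ∉ K, u t x = 0 := by
  obtain ⟨R, -, hR⟩ := hu.2.1
  exact ⟨Icc (-R) R, isCompact_Icc, fun t ht x hx => hR t ht x (not_le.1 (mt abs_le.1 hx)).le⟩

theorem IsClassicalSolution.differentiable (hu : IsClassicalSolution T m f u) :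
    Differentiable ℝ (uncurry u) :=
  hu.1.differentiable (by norm_num)

theorem IsClassicalSolution.exists_isCompact_eq_zero (hT : 0 < T)
    (hu : IsClassicalSolution T m f u) : ∃ K, IsCompact K ∧ ∀ t ∈ Icc 0 T, ∀ x ∉ K,
      u t x = 0 ∧ timeDeriv u t x = 0 ∧ spaceDeriv u t x = 0 := by
  obtain ⟨K, hK, hu0⟩ := hu.exists_isCompact
  exact ⟨K, hK, fun t ht x hx => ⟨hu0 t ht x hx,
    timeDeriv_eq_zero_off hT hu.differentiable hu0 t ht x hx,
    spaceDeriv_eq_zero_off hK.isClosed hu0 t ht x hx⟩⟩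

theorem IsClassicalSolution.timeDeriv_timeDeriv (hu : IsClassicalSolution T m f u) :
    ∀ t ∈ Icc 0 T, ∀ x, timeDeriv (timeDeriv u) t x =
      spaceDeriv (spaceDeriv u) t x - m x * u t x + f t x := by
  intro t ht x
  have h := hu.2.2 t ht x
  simp only [iteratedDeriv_succ, iteratedDeriv_zero] at h
  exact h

theorem IsClassicalSolution.sub (hu : IsClassicalSolution T m f u)
    (hv : IsClassicalSolution T m' f' v) :
    IsClassicalSolution T m (fun t x => f t x - f' t x + (m' x - m x) * v t x)
      (fun t x => u t x - v t x) := by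
  obtain ⟨hu2, ⟨Ru, hRu, hu0⟩, hue⟩ := hu
  obtain ⟨hv2, ⟨Rv, -, hv0⟩, hve⟩ := hv
  refine ⟨hu2.sub hv2, ⟨max Ru Rv, lt_max_of_lt_left hRu, fun t ht x hx => ?_⟩, fun t ht x => ?_⟩
  · show u t x - v t x = 0
    rw [hu0 t ht x ((le_max_left _ _).trans hx), hv0 t ht x ((le_max_right _ _).trans hx),
      sub_self]
  · have hslice_t : ∀ g : ℝ → ℝ → ℝ, ContDiff ℝ 2 (fun p : ℝ × ℝ => g p.1 p.2) →
        ContDiffAt ℝ 2 (g · x) t := fun g hg =>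
      (hg.comp (contDiff_id.prodMk contDiff_const)).contDiffAt
    have hslice_x : ∀ g : ℝ → ℝ → ℝ, ContDiff ℝ 2 (fun p : ℝ × ℝ => g p.1 p.2) →
        ContDiffAt ℝ 2 (g t ·) x := fun g hg =>
      (hg.comp (contDiff_const.prodMk contDiff_id)).contDiffAt
    rw [iteratedDeriv_fun_sub (hslice_t u hu2) (hslice_t v hv2),
      iteratedDeriv_fun_sub (hslice_x u hu2) (hslice_x v hv2), hue t ht x, hve t ht x]
    ring

theorem IsClassicalSolution.bddAbove_sqrt_integral_sq (hu : IsClassicalSolution T m f u) :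
    BddAbove (range fun s : Icc (0 : ℝ) T => √(∫ x, u s x ^ 2)) := by
  obtain ⟨K, hK, hu0⟩ := hu.exists_isCompact
  have hcont : ContinuousOn (fun s => √(∫ x, u s x ^ 2)) (Icc 0 T) :=
    (continuousOn_integral_of_eq_zero_off (F := fun s x => u s x ^ 2)
      (by have := hu.1.continuous; fun_prop) hK fun s hs x hx => by simp [hu0 s hs x hx]).sqrt
  simpa only [image_eq_range] using isCompact_Icc.bddAbove_image hcont

end ClassicalSolution

section Energy

variable {T G : ℝ} {K : Set ℝ} {m : ℝ → ℝ} {f w : ℝ → ℝ → ℝ}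

/-- The integrand on the left is `∂ₜ` of the energy density; its term `2 ∂ₓw ∂ₜ∂ₓw` is traded for
`-2 ∂ₓ²w ∂ₜw` by an integration by parts in `x`. -/
theorem integral_timeDeriv_energyDensity {t : ℝ} (hK : IsCompact K) (hm : Continuous m)
    (hw : ContDiff ℝ 2 (uncurry w)) (hwt0 : ∀ x ∉ K, timeDeriv w t x = 0)
    (hwx0 : ∀ x ∉ K, spaceDeriv w t x = 0) :
    ∫ x, (2 * timeDeriv w t x * timeDeriv (timeDeriv w) t x
      + 2 * spaceDeriv w t x * timeDeriv (spaceDeriv w) t x + m x * (2 * w t x * timeDeriv w t x))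
      = 2 * ∫ x, timeDeriv w t x * (timeDeriv (timeDeriv w) t x
        - spaceDeriv (spaceDeriv w) t x + m x * w t x) := by
  have hwt : ContDiff ℝ 1 (uncurry (timeDeriv w)) := hw.uncurry_timeDeriv (by norm_num)
  have hwx : ContDiff ℝ 1 (uncurry (spaceDeriv w)) := hw.uncurry_spaceDeriv (by norm_num)
  have cw := hw.continuous
  have cwt := hwt.continuous
  have cwx := hwx.continuous
  have cwtt := (hwt.uncurry_timeDeriv (m := 0) (by norm_num)).continuous
  have cwxt := (hwx.uncurry_timeDeriv (m := 0) (by norm_num)).continuous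
  have cwxx := (hwx.uncurry_spaceDeriv (m := 0) (by norm_num)).continuous
  have hint : Integrable fun x => spaceDeriv (spaceDeriv w) t x * timeDeriv w t x
      + spaceDeriv w t x * timeDeriv (spaceDeriv w) t x :=
    (by fun_prop : Continuous _).integrable_of_hasCompactSupport
      (.intro hK fun x hx => by simp [hwt0 x hx, hwx0 x hx])
  have hibp : ∫ x, (spaceDeriv (spaceDeriv w) t x * timeDeriv w t x
      + spaceDeriv w t x * timeDeriv (spaceDeriv w) t x) = 0 := by
    refine integral_eq_zero_of_hasDerivAt_of_hasCompactSupport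
      (f := fun x => spaceDeriv w t x * timeDeriv w t x) (fun x => ?_) hint
      (.intro hK fun x hx => by simp [hwx0 x hx])
    refine (hasDerivAt_spaceDeriv (hwx.differentiable one_ne_zero) t x).mul ?_
    rw [timeDeriv_spaceDeriv hw]
    exact hasDerivAt_spaceDeriv (hwt.differentiable one_ne_zero) t x
  have hint' : Integrable fun x => 2 * (timeDeriv w t x * (timeDeriv (timeDeriv w) t x
      - spaceDeriv (spaceDeriv w) t x + m x * w t x)) :=
    (by fun_prop : Continuous _).integrable_of_hasCompactSupport
      (.intro hK fun x hx => by simp [hwt0 x hx])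
  have hsplit := integral_add hint' (hint.const_mul 2)
  rw [integral_const_mul, integral_const_mul, hibp, mul_zero, add_zero] at hsplit
  rw [← hsplit]
  exact integral_congr_ae (ae_of_all _ fun x => by ring)

noncomputable def waveEnergy (m : ℝ → ℝ) (w : ℝ → ℝ → ℝ) (t : ℝ) : ℝ :=
  ∫ x, (timeDeriv w t x ^ 2 + spaceDeriv w t x ^ 2 + m x * w t x ^ 2)

theorem hasDerivAt_waveEnergy {t : ℝ} (hT : 0 < T) (hK : IsCompact K) (hm : Continuous m)
    (hw : ContDiff ℝ 2 (uncurry w)) (hw0 : ∀ t ∈ Icc 0 T, ∀ x ∉ K, w t x = 0)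
    (ht : t ∈ Ioo 0 T) :
    HasDerivAt (waveEnergy m w) (2 * ∫ x, timeDeriv w t x * (timeDeriv (timeDeriv w) t x
      - spaceDeriv (spaceDeriv w) t x + m x * w t x)) t := by
  have hd : Differentiable ℝ (uncurry w) := hw.differentiable (by norm_num)
  have hwt : ContDiff ℝ 1 (uncurry (timeDeriv w)) := hw.uncurry_timeDeriv (by norm_num)
  have hwx : ContDiff ℝ 1 (uncurry (spaceDeriv w)) := hw.uncurry_spaceDeriv (by norm_num)
  have cw := hw.continuous
  have cwt := hwt.continuous
  have cwx := hwx.continuous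
  have cwtt := (hwt.uncurry_timeDeriv (m := 0) (by norm_num)).continuous
  have cwxt := (hwx.uncurry_timeDeriv (m := 0) (by norm_num)).continuous
  have hwt0 := timeDeriv_eq_zero_off hT hd hw0
  have hwx0 := spaceDeriv_eq_zero_off hK.isClosed hw0
  have ht' := Ioo_subset_Icc_self ht
  rw [← integral_timeDeriv_energyDensity hK hm hw (hwt0 t ht') (hwx0 t ht')]
  refine hasDerivAt_integral_of_eq_zero_off (s := Ioo 0 T)
    (F := fun τ x => timeDeriv w τ x ^ 2 + spaceDeriv w τ x ^ 2 + m x * w τ x ^ 2)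
    (F' := fun τ x => 2 * timeDeriv w τ x * timeDeriv (timeDeriv w) τ x
      + 2 * spaceDeriv w τ x * timeDeriv (spaceDeriv w) τ x + m x * (2 * w τ x * timeDeriv w τ x))
    isOpen_Ioo ht hK (by fun_prop) (by fun_prop) (fun τ hτ x hx => ?_) (fun τ _ x => ?_)
  · have hτ' := Ioo_subset_Icc_self hτ
    simp [hw0 τ hτ' x hx, hwt0 τ hτ' x hx, hwx0 τ hτ' x hx]
  · have h1 := (hasDerivAt_timeDeriv (hwt.differentiable one_ne_zero) τ x).fun_pow 2
    have h2 := (hasDerivAt_timeDeriv (hwx.differentiable one_ne_zero) τ x).fun_pow 2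
    have h3 := ((hasDerivAt_timeDeriv hd τ x).fun_pow 2).const_mul (m x)
    convert (h1.fun_add h2).fun_add h3 using 1
    norm_num

theorem IsClassicalSolution.hasDerivAt_waveEnergy {t : ℝ} (hT : 0 < T) (hm : Continuous m)
    (hw : IsClassicalSolution T m f w) (ht : t ∈ Ioo 0 T) :
    HasDerivAt (waveEnergy m w) (2 * ∫ x, timeDeriv w t x * f t x) t := by
  obtain ⟨K, hK, hwK⟩ := hw.exists_isCompact
  refine (_root_.hasDerivAt_waveEnergy hT hK hm hw.1 hwK ht).congr_deriv ?_
  congr 1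
  refine integral_congr_ae (ae_of_all _ fun x => ?_)
  simp only [hw.timeDeriv_timeDeriv t (Ioo_subset_Icc_self ht) x]
  ring

theorem IsClassicalSolution.continuousOn_waveEnergy (hT : 0 < T) (hm : Continuous m)
    (hw : IsClassicalSolution T m f w) : ContinuousOn (waveEnergy m w) (Icc 0 T) := by
  obtain ⟨K, hK, hwK⟩ := hw.exists_isCompact_eq_zero hT
  have cw : Continuous (uncurry w) := hw.1.continuous
  have cwt := (hw.1.uncurry_timeDeriv (m := 1) (by norm_num)).continuous
  have cwx := (hw.1.uncurry_spaceDeriv (m := 1) (by norm_num)).continuous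
  exact continuousOn_integral_of_eq_zero_off (by fun_prop) hK fun t ht x hx => by
    simp [hwK t ht x hx]

theorem IsClassicalSolution.integral_timeDeriv_sq_le_waveEnergy (hT : 0 < T) (hm : Continuous m)
    (hm0 : ∀ x, 0 ≤ m x) (hw : IsClassicalSolution T m f w) {t : ℝ} (ht : t ∈ Icc 0 T) :
    ∫ x, timeDeriv w t x ^ 2 ≤ waveEnergy m w t := by
  obtain ⟨K, hK, hwK⟩ := hw.exists_isCompact_eq_zero hT
  have cw : Continuous (uncurry w) := hw.1.continuous
  have cwt := (hw.1.uncurry_timeDeriv (m := 1) (by norm_num)).continuous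
  have cwx := (hw.1.uncurry_spaceDeriv (m := 1) (by norm_num)).continuous
  refine integral_mono_of_nonneg (ae_of_all _ fun x => sq_nonneg _)
    ((by fun_prop : Continuous _).integrable_of_hasCompactSupport
      (.intro hK fun x hx => by simp [hwK t ht x hx])) (ae_of_all _ fun x => ?_)
  nlinarith [sq_nonneg (spaceDeriv w t x), mul_nonneg (hm0 x) (sq_nonneg (w t x))]

theorem IsClassicalSolution.sqrt_integral_timeDeriv_sq_le (hT : 0 < T) (hm : Continuous m)
    (hm0 : ∀ x, 0 ≤ m x) (hw : IsClassicalSolution T m f w) (hw0 : ∀ x, w 0 x = 0)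
    (hw1 : ∀ x, timeDeriv w 0 x = 0) (hf : ∀ t ∈ Icc 0 T, MemLp (f t) 2)
    (hG : ∀ t ∈ Icc 0 T, √(∫ x, f t x ^ 2) ≤ G) :
    ∀ t ∈ Icc 0 T, √(∫ x, timeDeriv w t x ^ 2) ≤ G * t := by
  obtain ⟨K, hK, hwK⟩ := hw.exists_isCompact_eq_zero hT
  have hG0 : 0 ≤ G := (Real.sqrt_nonneg _).trans (hG 0 ⟨le_rfl, hT.le⟩)
  have hwt_le := fun t (ht : t ∈ Icc 0 T) => hw.integral_timeDeriv_sq_le_waveEnergy hT hm hm0 ht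
  have hE : ∀ t ∈ Icc 0 T, √(waveEnergy m w t) ≤ G * t := by
    refine sqrt_le_of_hasDerivAt_le_two_sqrt_mul (g' := fun _ => G)
      (hw.continuousOn_waveEnergy hT hm)
      (fun t ht => (integral_nonneg fun x => sq_nonneg _).trans (hwt_le t ht))
      (by simp [waveEnergy, spaceDeriv, hw0, hw1])
      (fun t ht => hw.hasDerivAt_waveEnergy hT hm ht)
      (fun t => by simpa using (hasDerivAt_id t).const_mul G) (mul_zero G) (fun _ _ => hG0)
      (fun t ht => ?_)
    have ht' := Ioo_subset_Icc_self ht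
    have cwt := (hw.1.uncurry_timeDeriv (m := 1) (by norm_num)).continuous
    calc 2 * ∫ x, timeDeriv w t x * f t x
        ≤ 2 * (√(∫ x, timeDeriv w t x ^ 2) * √(∫ x, f t x ^ 2)) := by
          gcongr
          exact integral_mul_le_sqrt_mul_sqrt_s15
            ((by fun_prop : Continuous (timeDeriv w t)).memLp_of_hasCompactSupport
              (.intro hK fun x hx => (hwK t ht' x hx).2.1)) (hf t ht')
      _ ≤ 2 * √(waveEnergy m w t) * G := by
          rw [mul_assoc]
          gcongr
          exacts [hwt_le t ht', hG t ht']
  exact fun t ht => (Real.sqrt_le_sqrt (hwt_le t ht)).trans (hE t ht)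

end Energy

theorem IsClassicalSolution.sqrt_integral_sq_le {T G : ℝ} {m : ℝ → ℝ} {f w : ℝ → ℝ → ℝ}
    (hT : 0 < T) (hm : Continuous m) (hm0 : ∀ x, 0 ≤ m x) (hw : IsClassicalSolution T m f w)
    (hw0 : ∀ x, w 0 x = 0) (hw1 : ∀ x, timeDeriv w 0 x = 0) (hf : ∀ t ∈ Icc 0 T, MemLp (f t) 2)
    (hG : ∀ t ∈ Icc 0 T, √(∫ x, f t x ^ 2) ≤ G) :
    ∀ t ∈ Icc 0 T, √(∫ x, w t x ^ 2) ≤ G / 2 * t ^ 2 := by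
  obtain ⟨K, hK, hwK⟩ := hw.exists_isCompact_eq_zero hT
  have hG0 : 0 ≤ G := (Real.sqrt_nonneg _).trans (hG 0 ⟨le_rfl, hT.le⟩)
  have cw : Continuous (uncurry w) := hw.1.continuous
  have cwt : Continuous (uncurry (timeDeriv w)) :=
    (hw.1.uncurry_timeDeriv (m := 1) (by norm_num)).continuous
  have hwt := hw.sqrt_integral_timeDeriv_sq_le hT hm hm0 hw0 hw1 hf hG
  refine sqrt_le_of_hasDerivAt_le_two_sqrt_mul (f := fun t => ∫ x, w t x ^ 2)
    (f' := fun t => ∫ x, 2 * w t x * timeDeriv w t x)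
    (g' := fun t => G * t)
    (continuousOn_integral_of_eq_zero_off (by fun_prop) hK fun t ht x hx => by simp [hwK t ht x hx])
    (fun t _ => integral_nonneg fun x => sq_nonneg _) (by simp [hw0])
    (fun t ht => hasDerivAt_integral_of_eq_zero_off (F := fun t x => w t x ^ 2)
      (F' := fun t x => 2 * w t x * timeDeriv w t x) isOpen_Ioo ht hK (by fun_prop) (by fun_prop)
      (fun τ hτ x hx => by simp [hwK τ (Ioo_subset_Icc_self hτ) x hx])
      fun τ _ x => by simpa using (hasDerivAt_timeDeriv hw.differentiable τ x).fun_pow 2)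
    (fun t => ((hasDerivAt_pow 2 t).const_mul (G / 2)).congr_deriv (by push_cast; ring))
    (by simp) (fun t ht => mul_nonneg hG0 ht.1.le) (fun t ht => ?_)
  have ht' := Ioo_subset_Icc_self ht
  have hmemLp : ∀ g : ℝ → ℝ → ℝ, Continuous (uncurry g) → (∀ x ∉ K, g t x = 0) → MemLp (g t) 2 :=
    fun g hg hg0 => (by fun_prop : Continuous (g t)).memLp_of_hasCompactSupport (.intro hK hg0)
  calc ∫ x, 2 * w t x * timeDeriv w t x = 2 * ∫ x, w t x * timeDeriv w t x := by
        rw [← integral_const_mul]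
        simp only [mul_assoc]
    _ ≤ 2 * (√(∫ x, w t x ^ 2) * √(∫ x, timeDeriv w t x ^ 2)) := by
        gcongr
        exact integral_mul_le_sqrt_mul_sqrt_s15 (hmemLp w cw fun x hx => (hwK t ht' x hx).1)
          (hmemLp _ cwt fun x hx => (hwK t ht' x hx).2.1)
    _ ≤ 2 * √(∫ x, w t x ^ 2) * (G * t) := by
        rw [mul_assoc]
        gcongr
        exact hwt t ht'

theorem IsClassicalSolution.sqrt_integral_sub_sq_le {T D : ℝ} {m m' : ℝ → ℝ}
    {f u v : ℝ → ℝ → ℝ} (hT : 0 < T) (hm : Continuous m) (hm' : Continuous m')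
    (hm0 : ∀ x, 0 ≤ m x) (hD : ∀ x, |m x - m' x| ≤ D) (hu : IsClassicalSolution T m f u)
    (hv : IsClassicalSolution T m' f v) (h0 : ∀ x, u 0 x = v 0 x)
    (h1 : ∀ x, timeDeriv u 0 x = timeDeriv v 0 x) :
    ∀ t ∈ Icc 0 T, √(∫ x, (u t x - v t x) ^ 2) ≤
      D * (⨆ s : Icc (0 : ℝ) T, √(∫ x, v s x ^ 2)) / 2 * t ^ 2 := by
  have hw : IsClassicalSolution T m (fun t x => (m' x - m x) * v t x)
      (fun t x => u t x - v t x) := by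
    simpa only [sub_self, zero_add] using hu.sub hv
  obtain ⟨K, hK, hvK⟩ := hv.exists_isCompact
  have cv : Continuous (uncurry v) := hv.1.continuous
  have hD0 : 0 ≤ D := (abs_nonneg _).trans (hD 0)
  refine hw.sqrt_integral_sq_le hT hm hm0 (fun x => sub_eq_zero.2 (h0 x)) (fun x => ?_)
    (fun s hs => (by fun_prop : Continuous fun x => (m' x - m x) * v s x).memLp_of_hasCompactSupport
      (.intro hK fun x hx => by simp [hvK s hs x hx]))
    (fun s hs => ?_)
  · show deriv (fun τ => u τ x - v τ x) 0 = 0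
    rw [((hasDerivAt_timeDeriv hu.differentiable 0 x).fun_sub
      (hasDerivAt_timeDeriv hv.differentiable 0 x)).deriv, h1, sub_self]
  · refine (sqrt_integral_mul_sq_le (fun x => abs_sub_comm (m' x) (m x) ▸ hD x)
      ((by fun_prop : Continuous fun x => v s x ^ 2).integrable_of_hasCompactSupport
        (.intro hK fun x hx => by simp [hvK s hs x hx]))).trans ?_
    exact mul_le_mul_of_nonneg_left (le_ciSup hv.bddAbove_sqrt_integral_sq ⟨s, hs⟩) hD0

theorem wave_stability_in_potential_general
    (T : ℝ) (hT : 0 < T) (m m' : ℝ → ℝ)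
    (hmc : Continuous m) (hm'c : Continuous m')
    (hmb : ∃ M, ∀ x, |m x| ≤ M) (hm'b : ∃ M, ∀ x, |m' x| ≤ M)
    (hm : ∀ x, 0 ≤ m x)
    (u v : ℝ → ℝ → ℝ)
    (hu : IsClassicalSolution T m (fun _ _ => 0) u)
    (hv : IsClassicalSolution T m' (fun _ _ => 0) v)
    (h0 : ∀ x : ℝ, u 0 x = v 0 x)
    (h1 : ∀ x : ℝ, deriv (fun τ => u τ x) 0 = deriv (fun τ => v τ x) 0) :
    ∀ t ∈ Set.Icc (0 : ℝ) T,
      Real.sqrt (∫ x : ℝ, (u t x - v t x) ^ 2) ≤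
        T ^ 2 * (⨆ x : ℝ, |m x - m' x|) *
          ⨆ s : Set.Icc (0 : ℝ) T, Real.sqrt (∫ x : ℝ, (v (s : ℝ) x) ^ 2) := by
  intro t ht
  obtain ⟨M, hM⟩ := hmb
  obtain ⟨M', hM'⟩ := hm'b
  have hD : ∀ x, |m x - m' x| ≤ ⨆ y, |m y - m' y| := le_ciSup ⟨M + M', by
    rintro _ ⟨y, rfl⟩
    exact (abs_sub _ _).trans (add_le_add (hM y) (hM' y))⟩
  have hD0 : 0 ≤ ⨆ y, |m y - m' y| := Real.iSup_nonneg fun _ => abs_nonneg _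
  have hS0 : 0 ≤ ⨆ s : Icc (0 : ℝ) T, √(∫ x, v s x ^ 2) := Real.iSup_nonneg fun _ => by positivity
  have ht2 : t ^ 2 ≤ T ^ 2 := pow_le_pow_left₀ ht.1 ht.2 2
  calc √(∫ x, (u t x - v t x) ^ 2)
      ≤ (⨆ y, |m y - m' y|) * (⨆ s : Icc (0 : ℝ) T, √(∫ x, v s x ^ 2)) / 2 * t ^ 2 :=
        hu.sqrt_integral_sub_sq_le hT hmc hm'c hm hD hv h0 h1 t ht
    _ ≤ T ^ 2 * (⨆ y, |m y - m' y|) * ⨆ s : Icc (0 : ℝ) T, √(∫ x, v s x ^ 2) := by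
        nlinarith [mul_nonneg hD0 hS0]

/-- Stability of classical solutions with respect to the potential: if `u`,
`ũ` are classical solutions with bounded non-negative potentials `m`, `m̃`,
zero source and the same Cauchy data, then on `[0,T]`:
`‖u(t,·) − ũ(t,·)‖_{L²} ≤ T² · sup_x |m(x) − m̃(x)| · sup_{s∈[0,T]} ‖ũ(s,·)‖_{L²}`. -/
theorem wave_stability_in_potential
    (T : ℝ) (hT : 0 < T) (m m' : ℝ → ℝ)
    (hmc : Continuous m) (hm'c : Continuous m')
    (hmb : ∃ M, ∀ x, |m x| ≤ M) (hm'b : ∃ M, ∀ x, |m' x| ≤ M)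
    (hm : ∀ x, 0 ≤ m x) (hm' : ∀ x, 0 ≤ m' x)
    (u v : ℝ → ℝ → ℝ)
    (hu : IsClassicalSolution T m (fun _ _ => 0) u)
    (hv : IsClassicalSolution T m' (fun _ _ => 0) v)
    (h0 : ∀ x : ℝ, u 0 x = v 0 x)
    (h1 : ∀ x : ℝ, deriv (fun τ => u τ x) 0 = deriv (fun τ => v τ x) 0) :
    ∀ t ∈ Set.Icc (0 : ℝ) T,
      Real.sqrt (∫ x : ℝ, (u t x - v t x) ^ 2) ≤
        T ^ 2 * (⨆ x : ℝ, |m x - m' x|) *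
          ⨆ s : Set.Icc (0 : ℝ) T, Real.sqrt (∫ x : ℝ, (v (s : ℝ) x) ^ 2) :=
  wave_stability_in_potential_general T hT m m' hmc hm'c hmb hm'b hm u v hu hv h0 h1
end
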